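/- The modified thermal energy density ρ(λ) = (1/2π²) ∫₀^∞ k³ e^{−λ²k²}/(e^{βk} − 1) dk, for fixed β > 0, satisfies: (i) ρ(λ) converges to the Stefan–Boltzmann value (1/2π²)∫₀^∞ k³/(e^{βk}−1) dk = π²/(30β⁴) as λ → 0; (ii) as β → 0 with λ fixed, β·ρ → (1/2π²)∫₀^∞ k² e^{−λ²k²} dk = 1/(8π^{3/2}λ³). -/

import Mathlib

noncomputable section

open Real MeasureTheory Filter Set

lemma aux_exp_int {r : ℝ} (hr : 0 < r) :
    ∫ t in Ioi (0:ℝ), t ^ 3 * Real.exp (-(r * t)) = 6 / r ^ 4 := by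
  have h := Real.integral_rpow_mul_exp_neg_mul_Ioi (a := 4) (by norm_num) hr
  rw [show (4:ℝ) - 1 = 3 by norm_num] at h
  have h2 : ∫ t in Ioi (0:ℝ), t ^ 3 * Real.exp (-(r * t))
      = ∫ t in Ioi (0:ℝ), t ^ (3:ℝ) * Real.exp (-(r * t)) := by
    refine setIntegral_congr_fun measurableSet_Ioi fun t ht => ?_
    rw [show (3:ℝ) = ((3:ℕ):ℝ) by norm_num, Real.rpow_natCast]
  have hg : Real.Gamma 4 = 6 := by
    rw [show (4:ℝ) = ((3:ℕ):ℝ) + 1 by norm_num, Real.Gamma_nat_eq_factorial]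
    norm_num [Nat.factorial]
  rw [h2, h, hg, show (4:ℝ) = ((4:ℕ):ℝ) by norm_num, Real.rpow_natCast]
  field_simp

lemma aux_exp_integrable {r : ℝ} (hr : 0 < r) (n : ℕ) :
    IntegrableOn (fun t : ℝ => t ^ n * Real.exp (-(r * t))) (Ioi 0) := by
  have h := integrableOn_rpow_mul_exp_neg_mul_rpow (p := 1) (s := (n:ℝ)) (b := r)
    ((by norm_num : (-1:ℝ) < 0).trans_le (Nat.cast_nonneg n)) one_pos hr
  refine h.congr_fun (fun t ht => ?_) measurableSet_Ioi
  dsimp only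
  rw [Real.rpow_one, Real.rpow_natCast, neg_mul]

lemma aux_hasSum {β k : ℝ} (hβ : 0 < β) (hk : 0 < k) :
    HasSum (fun n : ℕ => k ^ 3 * Real.exp (-(β * (n+1)) * k))
      (k ^ 3 / (Real.exp (β * k) - 1)) := by
  have hpos : 0 < β * k := mul_pos hβ hk
  have ht1 : Real.exp (-(β*k)) < 1 := Real.exp_lt_one_iff.mpr (by linarith)
  have h := hasSum_geometric_of_lt_one (Real.exp_pos (-(β*k))).le ht1
  have h2 := h.mul_left (k ^ 3 * Real.exp (-(β*k)))
  have he : Real.exp (β*k) * Real.exp (-(β*k)) = 1 := by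
    rw [← Real.exp_add, add_neg_cancel, Real.exp_zero]
  have hE : 0 < Real.exp (β*k) - 1 := by
    have h0 : (1:ℝ) < Real.exp (β*k) := by
      rw [← Real.exp_zero]; exact Real.exp_lt_exp.mpr hpos
    linarith
  have hd : 0 < 1 - Real.exp (-(β*k)) := by linarith
  convert h2 using 1
  · rfl
  · funext n
    rw [← Real.exp_nat_mul, mul_assoc, ← Real.exp_add]
    congr 1
    push_cast
    ring
  · rw [← div_eq_mul_inv, div_eq_div_iff hE.ne' hd.ne']
    linear_combination (-(k ^ 3)) * he

lemma bose_int {β : ℝ} (hβ : 0 < β) :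
    ∫ k in Ioi (0:ℝ), k ^ 3 / (Real.exp (β * k) - 1) = π ^ 4 / (15 * β ^ 4) := by
  set F : ℕ → ℝ → ℝ := fun n k => k ^ 3 * Real.exp (-(β * (n+1)) * k) with hF
  have hrn : ∀ n : ℕ, (0:ℝ) < β * (n+1) := fun n => by positivity
  have hint : ∀ n, Integrable (F n) (volume.restrict (Ioi 0)) := by
    intro n
    have h := aux_exp_integrable (hrn n) 3
    refine h.congr_fun (fun t ht => ?_) measurableSet_Ioi
    simp only [hF, neg_mul]
  have hval : ∀ n : ℕ, ∫ k in Ioi (0:ℝ), F n k = 6 / (β*(n+1)) ^ 4 := by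
    intro n
    rw [← aux_exp_int (hrn n)]
    refine setIntegral_congr_fun measurableSet_Ioi fun t ht => ?_
    simp only [hF, neg_mul]
  have hnormval : ∀ n : ℕ, ∫ k in Ioi (0:ℝ), ‖F n k‖ = 6 / (β*(n+1)) ^ 4 := by
    intro n
    rw [← hval n]
    refine setIntegral_congr_fun measurableSet_Ioi fun t ht => ?_
    have ht0 : 0 < t := ht
    simp only [hF]
    rw [Real.norm_eq_abs, abs_of_nonneg
      (mul_nonneg (pow_nonneg ht0.le 3) (Real.exp_pos _).le)]
  -- shifted zeta sum
  have h4 := hasSum_zeta_four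
  have h5 : HasSum (fun n : ℕ => 1 / ((n:ℝ)+1) ^ 4) (π ^ 4 / 90) := by
    have := (hasSum_nat_add_iff' (f := fun n : ℕ => 1/(n:ℝ)^4) 1).mpr h4
    simpa using this
  have h6 : HasSum (fun n : ℕ => 6 / (β*((n:ℝ)+1)) ^ 4) (π ^ 4 / (15 * β ^ 4)) := by
    have h7 := h5.mul_left (6 / β ^ 4)
    have e1 : (fun n : ℕ => 6 / β ^ 4 * (1 / ((n:ℝ)+1) ^ 4))
        = fun n : ℕ => 6 / (β*((n:ℝ)+1)) ^ 4 := by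
      funext n
      have hn : ((n:ℝ)+1) ≠ 0 := by positivity
      field_simp
    have e2 : 6 / β ^ 4 * (π ^ 4 / 90) = π ^ 4 / (15 * β ^ 4) := by
      field_simp
      ring
    rwa [e1, e2] at h7
  have hsum : Summable fun n : ℕ => ∫ k in Ioi (0:ℝ), ‖F n k‖ := by
    refine Summable.congr h6.summable fun n => ?_
    rw [hnormval n]
  have key := hasSum_integral_of_summable_integral_norm hint hsum
  have heq : ∫ k in Ioi (0:ℝ), (∑' n, F n k)
      = ∫ k in Ioi (0:ℝ), k ^ 3 / (Real.exp (β * k) - 1) := by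
    refine setIntegral_congr_fun measurableSet_Ioi fun k hk => ?_
    exact (aux_hasSum hβ hk).tsum_eq
  rw [heq] at key
  have key2 : HasSum (fun n : ℕ => ∫ k in Ioi (0:ℝ), F n k) (π ^ 4 / (15 * β ^ 4)) := by
    refine h6.congr_fun fun n => ?_
    rw [hval n]
  exact (key2.unique key).symm

lemma gauss_int {lam : ℝ} (hlam : 0 < lam) :
    ∫ k in Ioi (0:ℝ), k ^ 2 * Real.exp (-(lam ^ 2) * k ^ 2)
      = Real.sqrt π / (4 * lam ^ 3) := by
  have h := integral_rpow_mul_exp_neg_mul_rpow (p := 2) (q := 2) (b := lam^2)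
    two_pos (by norm_num) (by positivity)
  have h2 : ∫ k in Ioi (0:ℝ), k ^ 2 * Real.exp (-(lam ^ 2) * k ^ 2)
      = ∫ x in Ioi (0:ℝ), x ^ (2:ℝ) * Real.exp (-(lam^2) * x ^ (2:ℝ)) := by
    refine setIntegral_congr_fun measurableSet_Ioi fun t ht => ?_
    rw [show (2:ℝ) = ((2:ℕ):ℝ) by norm_num, Real.rpow_natCast]
  have h3 : ((lam^2:ℝ)) ^ (-(2+1)/2 : ℝ) = (lam ^ 3)⁻¹ := by
    rw [← Real.rpow_natCast lam 2, ← Real.rpow_mul hlam.le,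
      show ((2:ℕ):ℝ) * (-(2+1)/2) = -((3:ℕ):ℝ) by norm_num,
      Real.rpow_neg hlam.le, Real.rpow_natCast]
  have hg : Real.Gamma ((2+1)/2) = Real.sqrt π / 2 := by
    rw [show ((2+1)/2:ℝ) = 1/2 + 1 by norm_num, Real.Gamma_add_one (by norm_num),
      Real.Gamma_one_half_eq]
    ring
  rw [h2, h, h3, hg, eq_div_iff (by positivity : (4:ℝ)*lam^3 ≠ 0)]
  field_simp
  ring

lemma gauss_integrable {lam : ℝ} (hlam : 0 < lam) :
    IntegrableOn (fun k : ℝ => k ^ 2 * Real.exp (-(lam ^ 2) * k ^ 2)) (Ioi 0) := by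
  have h := integrableOn_rpow_mul_exp_neg_mul_rpow (p := 2) (s := (2:ℝ)) (b := lam^2)
    (by norm_num) two_pos (by positivity)
  refine h.congr_fun (fun t ht => ?_) measurableSet_Ioi
  dsimp only
  rw [show (2:ℝ) = ((2:ℕ):ℝ) by norm_num, Real.rpow_natCast]

lemma bose_integrable {β : ℝ} (hβ : 0 < β) :
    IntegrableOn (fun k : ℝ => k ^ 3 / (Real.exp (β * k) - 1)) (Ioi 0) := by
  have hbound : IntegrableOn (fun k : ℝ => (2/β) * (k ^ 2 * Real.exp (-(β/2 * k)))) (Ioi 0) :=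
    (aux_exp_integrable (by positivity) 2).const_mul _
  refine hbound.mono' ?_ ?_
  · exact ((by fun_prop : Measurable fun k : ℝ =>
      k ^ 3 / (Real.exp (β * k) - 1))).aestronglyMeasurable
  · filter_upwards [ae_restrict_mem measurableSet_Ioi] with k hk
    have hk0 : 0 < k := hk
    have hu : 0 < β/2 * k := by positivity
    have h1 : Real.exp (β*k) = Real.exp (β/2*k) * Real.exp (β/2*k) := by
      rw [← Real.exp_add]; ring_nf
    have h2 : β/2*k + 1 ≤ Real.exp (β/2*k) := Real.add_one_le_exp _
    have hexp : 0 < Real.exp (β/2*k) := Real.exp_pos _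
    have hE : 0 < Real.exp (β*k) - 1 := by nlinarith
    have hiE : Real.exp (-(β/2*k)) * Real.exp (β/2*k) = 1 := by
      rw [← Real.exp_add, neg_add_cancel, Real.exp_zero]
    rw [Real.norm_eq_abs, abs_of_nonneg (by positivity)]
    rw [div_le_iff₀ hE]
    have hexpneg : 0 < Real.exp (-(β/2*k)) := Real.exp_pos _
    have key : β/2*k ≤ Real.exp (-(β/2*k)) * (Real.exp (β*k) - 1) := by
      nlinarith [mul_le_mul_of_nonneg_left h2 hexp.le,
        mul_le_mul_of_nonneg_left h2 hexpneg.le]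
    have hfin := mul_le_mul_of_nonneg_left key
      (le_of_lt (by positivity : (0:ℝ) < 2/β*k^2))
    have heq : 2/β*k^2*(β/2*k) = k^3 := by
      field_simp
    have hre : 2/β*(k^2*Real.exp (-(β/2*k)))*(Real.exp (β*k) - 1)
        = 2/β*k^2*(Real.exp (-(β/2*k))*(Real.exp (β*k) - 1)) := by ring
    linarith [hfin]

open Topology in
lemma aux_slope : Tendsto (fun t : ℝ => t / (Real.exp t - 1)) (𝓝[≠] (0:ℝ)) (𝓝 1) := by
  have h := Real.hasDerivAt_exp 0
  rw [hasDerivAt_iff_tendsto_slope] at h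
  have h2 : Tendsto (fun t : ℝ => (Real.exp t - 1) / t) (𝓝[≠] (0:ℝ)) (𝓝 1) := by
    simpa [slope_fun_def, Real.exp_zero, div_eq_inv_mul] using h
  have h3 := h2.inv₀ (by norm_num)
  simpa [inv_div] using h3

/-- The thermal energy density of a massless field on Quantum Spacetime with Planck
length λ, at inverse temperature β. -/
def rhoQST (lam β : ℝ) : ℝ :=
  (1 / (2 * π ^ 2)) *
    ∫ k in Ioi (0 : ℝ), k ^ 3 * Real.exp (-(lam ^ 2) * k ^ 2) / (Real.exp (β * k) - 1)

open Topology

/-- (i) As λ → 0⁺ the density tends to the Stefan–Boltzmann value π²/(30β⁴); (ii) as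
β → 0⁺ with λ fixed, β·ρ tends to 1/(8π^{3/2}λ³). -/
theorem stmt17 (lam β : ℝ) (hlam : 0 < lam) (hβ : 0 < β) :
    ((1 / (2 * π ^ 2)) * ∫ k in Ioi (0 : ℝ), k ^ 3 / (Real.exp (β * k) - 1) =
        π ^ 2 / (30 * β ^ 4)) ∧
    Tendsto (fun l : ℝ => rhoQST l β) (nhdsWithin 0 (Ioi 0))
      (nhds (π ^ 2 / (30 * β ^ 4))) ∧
    ((1 / (2 * π ^ 2)) * ∫ k in Ioi (0 : ℝ), k ^ 2 * Real.exp (-(lam ^ 2) * k ^ 2) =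
        1 / (8 * π * Real.sqrt π * lam ^ 3)) ∧
    Tendsto (fun b : ℝ => b * rhoQST lam b) (nhdsWithin 0 (Ioi 0))
      (nhds (1 / (8 * π * Real.sqrt π * lam ^ 3))) := by
  have hπ : (0:ℝ) < π := Real.pi_pos
  have hsp : Real.sqrt π * Real.sqrt π = π := Real.mul_self_sqrt hπ.le
  have hsp0 : 0 < Real.sqrt π := Real.sqrt_pos.mpr hπ
  have hEpos : ∀ b k : ℝ, 0 < b → 0 < k → 0 < Real.exp (b * k) - 1 := by
    intro b k hb hk
    have h0 : (1:ℝ) < Real.exp (b*k) := by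
      rw [← Real.exp_zero]
      exact Real.exp_lt_exp.mpr (by positivity)
    linarith
  have part1 : (1 / (2 * π ^ 2)) * ∫ k in Ioi (0 : ℝ), k ^ 3 / (Real.exp (β * k) - 1) =
      π ^ 2 / (30 * β ^ 4) := by
    rw [bose_int hβ]
    rw [div_mul_div_comm, div_eq_div_iff (by positivity) (by positivity)]
    ring
  have part3 : (1 / (2 * π ^ 2)) * ∫ k in Ioi (0 : ℝ), k ^ 2 * Real.exp (-(lam ^ 2) * k ^ 2) =
      1 / (8 * π * Real.sqrt π * lam ^ 3) := by
    rw [gauss_int hlam]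
    rw [div_mul_div_comm, div_eq_div_iff (by positivity) (by positivity)]
    linear_combination (8*π*lam^3) * hsp
  refine ⟨part1, ?_, part3, ?_⟩
  · -- λ → 0⁺
    have hDCT := tendsto_integral_filter_of_dominated_convergence
      (μ := volume.restrict (Ioi 0)) (l := 𝓝[>] (0:ℝ))
      (F := fun l k => k ^ 3 * Real.exp (-(l ^ 2) * k ^ 2) / (Real.exp (β * k) - 1))
      (f := fun k => k ^ 3 / (Real.exp (β * k) - 1))
      (fun k => k ^ 3 / (Real.exp (β * k) - 1))
      (Eventually.of_forall fun l =>
        ((by fun_prop : Measurable fun k : ℝ =>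
          k ^ 3 * Real.exp (-(l ^ 2) * k ^ 2) / (Real.exp (β * k) - 1))).aestronglyMeasurable)
      ?_ (bose_integrable hβ) ?_
    · have := hDCT.const_mul (1 / (2 * π ^ 2))
      rw [part1] at this
      exact this
    · refine Eventually.of_forall fun l => ?_
      filter_upwards [ae_restrict_mem measurableSet_Ioi] with k hk
      have hk0 : (0:ℝ) < k := hk
      have hE := hEpos β k hβ hk0
      have hexp1 : Real.exp (-(l ^ 2) * k ^ 2) ≤ 1 := by
        rw [Real.exp_le_one_iff]
        nlinarith [sq_nonneg l, sq_nonneg k]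
      rw [Real.norm_eq_abs, abs_of_nonneg (by positivity)]
      gcongr
      exact mul_le_of_le_one_right (by positivity) hexp1
    · filter_upwards [ae_restrict_mem measurableSet_Ioi] with k hk
      have hE := hEpos β k hβ hk
      have hc : Continuous fun l : ℝ =>
          k ^ 3 * Real.exp (-(l ^ 2) * k ^ 2) / (Real.exp (β * k) - 1) := by fun_prop
      have h0 := (hc.tendsto 0).mono_left (nhdsWithin_le_nhds (s := Ioi (0:ℝ)))
      simpa using h0
  · -- β → 0⁺
    have hfun : (fun b : ℝ => b * rhoQST lam b) = fun b => (1 / (2 * π ^ 2)) *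
        ∫ k in Ioi (0:ℝ), b * (k ^ 3 * Real.exp (-(lam ^ 2) * k ^ 2) /
          (Real.exp (b * k) - 1)) := by
      funext b
      rw [integral_const_mul, rhoQST]
      ring
    rw [hfun]
    have hDCT := tendsto_integral_filter_of_dominated_convergence
      (μ := volume.restrict (Ioi 0)) (l := 𝓝[>] (0:ℝ))
      (F := fun b k => b * (k ^ 3 * Real.exp (-(lam ^ 2) * k ^ 2) /
        (Real.exp (b * k) - 1)))
      (f := fun k => k ^ 2 * Real.exp (-(lam ^ 2) * k ^ 2))
      (fun k => k ^ 2 * Real.exp (-(lam ^ 2) * k ^ 2))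
      (Eventually.of_forall fun b =>
        ((by fun_prop : Measurable fun k : ℝ =>
          b * (k ^ 3 * Real.exp (-(lam ^ 2) * k ^ 2) /
            (Real.exp (b * k) - 1)))).aestronglyMeasurable)
      ?_ (gauss_integrable hlam) ?_
    · have := hDCT.const_mul (1 / (2 * π ^ 2))
      rw [gauss_int hlam] at this
      have hval : (1 / (2 * π ^ 2)) * (Real.sqrt π / (4 * lam ^ 3))
          = 1 / (8 * π * Real.sqrt π * lam ^ 3) := by
        rw [div_mul_div_comm, div_eq_div_iff (by positivity) (by positivity)]
        linear_combination (8*π*lam^3) * hsp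
      rwa [hval] at this
    · filter_upwards [self_mem_nhdsWithin] with b hb
      have hb0 : (0:ℝ) < b := hb
      filter_upwards [ae_restrict_mem measurableSet_Ioi] with k hk
      have hk0 : (0:ℝ) < k := hk
      have hE := hEpos b k hb0 hk0
      have hbk : b * k + 1 ≤ Real.exp (b * k) := Real.add_one_le_exp _
      have he : (0:ℝ) < Real.exp (-(lam ^ 2) * k ^ 2) := Real.exp_pos _
      rw [Real.norm_eq_abs, abs_of_nonneg (by positivity), mul_div_assoc',
        div_le_iff₀ hE]
      nlinarith [mul_nonneg (mul_nonneg (sq_nonneg k) he.le)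
        (by linarith : (0:ℝ) ≤ Real.exp (b*k) - 1 - b*k)]
    · filter_upwards [ae_restrict_mem measurableSet_Ioi] with k hk
      have hk0 : (0:ℝ) < k := hk
      have hlim1 : Tendsto (fun b : ℝ => b * k) (𝓝[>] (0:ℝ)) (𝓝[≠] (0:ℝ)) := by
        rw [tendsto_nhdsWithin_iff]
        constructor
        · have hc2 : Continuous fun b : ℝ => b * k := by fun_prop
          have := (hc2.tendsto (0:ℝ)).mono_left (nhdsWithin_le_nhds (s := Ioi (0:ℝ)))
          simpa using this
        · filter_upwards [self_mem_nhdsWithin] with b hb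
          have hb0 : (0:ℝ) < b := hb
          simp [(mul_pos hb0 hk0).ne']
      have hlim2 := (aux_slope.comp hlim1).const_mul
        (k ^ 2 * Real.exp (-(lam ^ 2) * k ^ 2))
      rw [mul_one] at hlim2
      refine Tendsto.congr (fun b => ?_) hlim2
      simp only [Function.comp]
      ring
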